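/- For all θ, Φ ∈ ℝ, the 2×2 complex matrix identity exp(−i·θ·(cos(2Φ)·σX + sin(2Φ)·σY)) · exp(−i·θ·(cos(2Φ)·σX − sin(2Φ)·σY)) = !![d, −i·t; −i·t, conj(d)] holds, where d = cos²θ − sin²θ·e^{−4iΦ} and t = sin(2θ)·cos(2Φ). -/

import Mathlib

/-!
Both generators are of the form `cos α • σX ± sin α • σY`, i.e. antidiagonal matrices with the
unit entries `e^{∓iα}`, so they square to the identity. For such an involution `A` the exponential
series splits into even and odd parts, `exp (z • A) = cosh z • 1 + sinh z • A`, and with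
`z = -iθ` each factor is `cos θ • 1 - i sin θ • A`. The product of two such factors is then an
explicit `2 × 2` computation, and the entries are recognised through `e^{-iα} + e^{iα} = 2 cos α`
and `sin 2θ = 2 sin θ cos θ`.
-/

open Complex

theorem NormedSpace.exp_smul_of_mul_self_eq_one {𝔸 : Type*} [Ring 𝔸] [Algebra ℂ 𝔸]
    [TopologicalSpace 𝔸] [IsTopologicalRing 𝔸] [ContinuousSMul ℂ 𝔸] [T2Space 𝔸] {A : 𝔸}
    (hA : A * A = 1) (z : ℂ) :
    NormedSpace.exp (z • A) = cosh z • (1 : 𝔸) + sinh z • A := by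
  have hpow_even (k : ℕ) : A ^ (2 * k) = 1 := by rw [pow_mul, sq, hA, one_pow]
  have hpow_odd (k : ℕ) : A ^ (2 * k + 1) = A := by rw [pow_succ, hpow_even, one_mul]
  rw [NormedSpace.exp_eq_tsum ℂ]
  refine HasSum.tsum_eq (HasSum.even_add_odd ?_ ?_)
  · convert (hasSum_cosh z).smul_const (1 : 𝔸) using 2 with k
    rw [smul_pow, hpow_even, smul_smul, div_eq_inv_mul]
  · convert (hasSum_sinh z).smul_const A using 2 with k
    rw [smul_pow, hpow_odd, smul_smul, div_eq_inv_mul]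

namespace Matrix

variable {R : Type*} [CommRing R]

theorem antidiag_mul_self (a b : R) :
    !![0, a; b, 0] * !![0, a; b, 0] = (a * b) • (1 : Matrix (Fin 2) (Fin 2) R) := by
  ext i j; fin_cases i <;> fin_cases j <;> simp [mul_comm]

theorem smul_one_add_antidiag_mul_smul_one_add_antidiag_swap (x y a b : R) :
    (x • 1 + y • !![0, a; b, 0]) * (x • 1 + y • !![0, b; a, 0])
      = !![x ^ 2 + y ^ 2 * a ^ 2, x * y * (a + b); x * y * (a + b), x ^ 2 + y ^ 2 * b ^ 2] := by
  ext i j; fin_cases i <;> fin_cases j <;> simp [Matrix.mul_apply, Fin.sum_univ_two] <;> ring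

end Matrix

namespace Complex

theorem cos_smul_pauliX_add_sin_smul_pauliY (z : ℂ) :
    cos z • !![0, 1; 1, 0] + sin z • !![0, -I; I, 0] = !![0, exp (-z * I); exp (z * I), 0] := by
  rw [exp_mul_I, exp_mul_I, cos_neg, sin_neg]
  ext i j; fin_cases i <;> fin_cases j <;> simp

theorem cos_smul_pauliX_sub_sin_smul_pauliY (z : ℂ) :
    cos z • !![0, 1; 1, 0] - sin z • !![0, -I; I, 0] = !![0, exp (z * I); exp (-z * I), 0] := by
  simpa [sub_eq_add_neg] using cos_smul_pauliX_add_sin_smul_pauliY (-z)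

end Complex

/-- Even-sector computation of the echoed SDF sequence:
`exp(-iθ(cos2Φ·σX + sin2Φ·σY))·exp(-iθ(cos2Φ·σX - sin2Φ·σY)) = !![d, -it; -it, conj d]`
with `d = cos²θ - sin²θ·e^{-4iΦ}` and `t = sin(2θ)cos(2Φ)`. -/
theorem stmt_12 (θ Φ : ℝ)
    (σX σY : Matrix (Fin 2) (Fin 2) ℂ)
    (hX : σX = !![0, 1; 1, 0]) (hY : σY = !![0, -Complex.I; Complex.I, 0])
    (d : ℂ) (hd : d = ((Real.cos θ) ^ 2 : ℂ)
      - ((Real.sin θ) ^ 2 : ℂ) * Complex.exp (-(4 * (Φ : ℂ)) * Complex.I))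
    (t : ℝ) (ht : t = Real.sin (2 * θ) * Real.cos (2 * Φ)) :
    NormedSpace.exp ((-(Complex.I * (θ : ℂ))) •
        ((Real.cos (2 * Φ) : ℂ) • σX + (Real.sin (2 * Φ) : ℂ) • σY))
      * NormedSpace.exp ((-(Complex.I * (θ : ℂ))) •
        ((Real.cos (2 * Φ) : ℂ) • σX - (Real.sin (2 * Φ) : ℂ) • σY))
    = !![d, -Complex.I * (t : ℂ); -Complex.I * (t : ℂ), starRingEnd ℂ d] := by
  subst hX hY hd ht
  have hinv (z : ℂ) : exp (-z * I) * exp (z * I) = 1 := by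
    rw [← exp_add, neg_mul, neg_add_cancel, exp_zero]
  have hcosh : cosh (-(I * θ)) = cos θ := by rw [cosh_neg, mul_comm, cosh_mul_I]
  have hsinh : sinh (-(I * θ)) = -(sin θ * I) := by rw [sinh_neg, mul_comm, sinh_mul_I]
  have hsq : exp (-(4 * (Φ : ℂ)) * I) = exp (-(2 * Φ : ℂ) * I) ^ 2 := by
    rw [← exp_nat_mul]; ring_nf
  push_cast
  rw [cos_smul_pauliX_add_sin_smul_pauliY, cos_smul_pauliX_sub_sin_smul_pauliY,
    NormedSpace.exp_smul_of_mul_self_eq_one (by rw [Matrix.antidiag_mul_self, hinv, one_smul]),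
    NormedSpace.exp_smul_of_mul_self_eq_one
      (by rw [Matrix.antidiag_mul_self, mul_comm, hinv, one_smul]),
    Matrix.smul_one_add_antidiag_mul_smul_one_add_antidiag_swap, hcosh, hsinh, hsq]
  have hdiag (b : ℂ) : cos θ ^ 2 + (-(sin θ * I)) ^ 2 * b ^ 2 = cos θ ^ 2 - sin θ ^ 2 * b ^ 2 := by
    linear_combination sin (θ : ℂ) ^ 2 * b ^ 2 * I_sq
  have hoff : cos θ * -(sin θ * I) * (exp (-(2 * Φ : ℂ) * I) + exp (2 * Φ * I))
      = -I * (sin (2 * θ) * cos (2 * Φ)) := by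
    rw [sin_two_mul, add_comm, ← two_cos]; ring
  have hconj : starRingEnd ℂ (cos θ ^ 2 - sin θ ^ 2 * exp (-(2 * Φ : ℂ) * I) ^ 2)
      = cos θ ^ 2 - sin θ ^ 2 * exp (2 * Φ * I) ^ 2 := by
    simp [← exp_conj, ← cos_conj, ← sin_conj, map_ofNat]
  rw [hdiag, hdiag, hoff, hconj]
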